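/- With the same setup, for a while loop while(φ){C'} with loop body C' for which the decomposition wp⟦C'⟧(X)(σ₀) = ∑_{σ'} wp⟦C'⟧([σ'])(σ₀)·X(σ') holds for all X, the weakest preexpectation of the loop satisfies the path-sum characterization: wp⟦while(φ){C'}⟧(X)(σ₀) = sup_{k ∈ ℕ} ∑_{σ₀,…,σ_{k−1}} ([¬φ]·X)(σ_{k−1}) · ∏_{i=0}^{k−2} wp⟦if φ then C' else skip⟧([σ_{i+1}])(σᵢ), where the inner sum ranges over all length-k sequences of states (modulo agreement on relevant variables) starting at the given initial state σ₀. -/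
import Mathlib


open ENNReal NNReal

/-- Loop-free probabilistic guarded commands over a state space `S`:
skip, assignments (state updates), sequencing, probabilistic choice with
rational probability, and conditionals. -/
inductive PGCL (S : Type) : Type where
  | skip : PGCL S
  | assign (u : S → S) : PGCL S
  | seq (c₁ c₂ : PGCL S) : PGCL S
  | prob (p : NNRat) (c₁ c₂ : PGCL S) : PGCL S
  | ite (φ : S → Bool) (c₁ c₂ : PGCL S) : PGCL S

/-- The weakest preexpectation transformer, satisfying the standard compositional rules:
wp⟦skip⟧(X) = X, wp⟦x:=a⟧(X) = X∘update, wp⟦C₁;C₂⟧(X) = wp⟦C₁⟧(wp⟦C₂⟧(X)),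
wp⟦C₁[p]C₂⟧(X) = p·wp⟦C₁⟧(X) + (1−p)·wp⟦C₂⟧(X),
wp⟦if φ then C₁ else C₂⟧(X) = [φ]·wp⟦C₁⟧(X) + [¬φ]·wp⟦C₂⟧(X). -/
noncomputable def wp {S : Type} : PGCL S → (S → ℝ≥0∞) → (S → ℝ≥0∞)
  | .skip, X => X
  | .assign u, X => fun σ => X (u σ)
  | .seq c₁ c₂, X => wp c₁ (wp c₂ X)
  | .prob p c₁ c₂, X => fun σ =>
      ((p : ℝ≥0) : ℝ≥0∞) * wp c₁ X σ + (1 - ((p : ℝ≥0) : ℝ≥0∞)) * wp c₂ X σ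
  | .ite φ c₁ c₂, X => fun σ => if φ σ then wp c₁ X σ else wp c₂ X σ

/-- The point-mass expectation of a state `σ'`: the Iverson bracket of the
characteristic predicate of `σ'` (states modulo agreement on the relevant variables). -/
noncomputable def pointMass {S : Type} [DecidableEq S] (σ' : S) : S → ℝ≥0∞ :=
  fun τ => if τ = σ' then 1 else 0

/-- The characteristic function Φ of the loop while(φ){C'} with postexpectation X:
Φ(Y) = [¬φ]·X + [φ]·wp⟦C'⟧(Y). -/
noncomputable def loopIter {S : Type} (φ : S → Bool) (C' : PGCL S) (X : S → ℝ≥0∞) :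
    (S → ℝ≥0∞) → (S → ℝ≥0∞) :=
  fun Y σ => if φ σ then wp C' Y σ else X σ

/-- wp of while(φ){C'}: the least fixed point of the characteristic function, which by
Kleene's theorem equals the supremum of the Kleene iterates from the zero expectation. -/
noncomputable def wpLoop {S : Type} (φ : S → Bool) (C' : PGCL S) (X : S → ℝ≥0∞) :
    S → ℝ≥0∞ :=
  ⨆ n : ℕ, (loopIter φ C' X)^[n] ⊥

/-- Path-sum characterization of the weakest preexpectation of a while loop: if the loop
body C' satisfies the point-mass decomposition, then wp⟦while(φ){C'}⟧(X)(σ₀) equals the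
supremum over path lengths of the sum over all state sequences σ₀, σ₁, …, σₖ starting at
the initial state σ₀ of ([¬φ]·X)(last state) times the product of the one-step
probabilities wp⟦if φ then C' else skip⟧([σᵢ₊₁])(σᵢ). -/
theorem stmt16 {S : Type} [Countable S] [DecidableEq S]
    (φ : S → Bool) (C' : PGCL S)
    (hdec : ∀ (X : S → ℝ≥0∞) (σ₀ : S),
      wp C' X σ₀ = ∑' σ' : S, wp C' (pointMass σ') σ₀ * X σ')
    (X : S → ℝ≥0∞) (σ₀ : S) :
    wpLoop φ C' X σ₀ =
      ⨆ k : ℕ, ∑' tail : Fin k → S,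
        (fun path : Fin (k + 1) → S =>
          (if φ (path (Fin.last k)) then 0 else X (path (Fin.last k))) *
          ∏ i : Fin k,
            wp (PGCL.ite φ C' PGCL.skip) (pointMass (path i.succ)) (path i.castSucc))
        (Fin.cons σ₀ tail) := by
  have hbot : wp C' (⊥ : S → ℝ≥0∞) = ⊥ := by
    funext σ
    rw [hdec]
    simp
  set F := loopIter φ C' X with hF
  have key : ∀ (k : ℕ) (σ : S),
      (∑' tail : Fin k → S,
        (fun path : Fin (k + 1) → S =>
          (if φ (path (Fin.last k)) then 0 else X (path (Fin.last k))) *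
          ∏ i : Fin k,
            wp (PGCL.ite φ C' PGCL.skip) (pointMass (path i.succ)) (path i.castSucc))
        (Fin.cons σ tail)) = F^[k+1] ⊥ σ := by
    intro k
    induction k with
    | zero =>
      intro σ
      have : ∀ tail : Fin 0 → S, (Fin.cons σ tail : Fin 1 → S) (Fin.last 0) = σ := by
        intro tail; rfl
      simp only [this]
      rw [tsum_eq_single (fun i => i.elim0) (by intro b hb; exact absurd (Subsingleton.elim b _) hb)]
      simp [hF, loopIter, hbot]
    | succ k ih =>
      intro σ
      set step : S → S → ℝ≥0∞ := fun τ τ' => wp (PGCL.ite φ C' PGCL.skip) (pointMass τ') τ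
        with hstep
      set g : (Fin (k+1) → S) → ℝ≥0∞ := fun path' =>
        (if φ (path' (Fin.last k)) then 0 else X (path' (Fin.last k))) *
        ∏ i : Fin k, step (path' i.castSucc) (path' i.succ) with hg
      have hsplit : ∀ (σ₁ : S) (rest : Fin k → S),
          (fun path : Fin (k+1+1) → S =>
            (if φ (path (Fin.last (k+1))) then 0 else X (path (Fin.last (k+1)))) *
            ∏ i : Fin (k+1), step (path i.castSucc) (path i.succ))
          (Fin.cons σ (Fin.cons σ₁ rest)) = step σ σ₁ * g (Fin.cons σ₁ rest) := by
        intro σ₁ rest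
        set tail : Fin (k+1) → S := Fin.cons σ₁ rest with htail
        have hlast : (Fin.cons σ tail : Fin (k+2) → S) (Fin.last (k+1)) = tail (Fin.last k) := by
          rw [show (Fin.last (k+1)) = (Fin.last k).succ from rfl, Fin.cons_succ]
        have hprod : (∏ i : Fin (k+1),
            step ((Fin.cons σ tail : Fin (k+2) → S) i.castSucc)
              ((Fin.cons σ tail : Fin (k+2) → S) i.succ))
            = step σ σ₁ * ∏ i : Fin k, step (tail i.castSucc) (tail i.succ) := by
          rw [Fin.prod_univ_succ]
          refine congrArg₂ (· * ·) ?_ (Finset.prod_congr rfl fun i _ => ?_)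
          · simp [htail]
          · rw [← Fin.succ_castSucc, Fin.cons_succ,
              show (i.succ.succ : Fin (k+2)) = (i.succ : Fin (k+1)).succ from rfl,
              Fin.cons_succ]
        simp only [hg, hlast, hprod]
        ring
      calc (∑' tail : Fin (k+1) → S,
            (fun path : Fin (k+1+1) → S =>
              (if φ (path (Fin.last (k+1))) then 0 else X (path (Fin.last (k+1)))) *
              ∏ i : Fin (k+1), step (path i.castSucc) (path i.succ))
            (Fin.cons σ tail))
          = ∑' p : S × (Fin k → S),
              step σ p.1 * g (Fin.cons p.1 p.2) := by
            rw [← (Fin.consEquiv (fun _ : Fin (k+1) => S)).tsum_eq]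
            exact tsum_congr fun p => hsplit p.1 p.2
        _ = ∑' σ₁ : S, step σ σ₁ * F^[k+1] ⊥ σ₁ := by
            rw [ENNReal.tsum_prod (f := fun a b => step σ a * g (Fin.cons a b))]
            exact tsum_congr fun σ₁ => by
              rw [ENNReal.tsum_mul_left]
              exact congrArg _ (ih σ₁)
        _ = F^[k+1+1] ⊥ σ := by
            have hit : F^[k+1+1] ⊥ σ = if φ σ then wp C' (F^[k+1] ⊥) σ else X σ := by
              rw [Function.iterate_succ_apply']; rfl
            rw [hit]
            by_cases hφ : φ σ
            · have hstep' : ∀ σ₁, step σ σ₁ = wp C' (pointMass σ₁) σ := by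
                intro σ₁; simp [hstep, wp, hφ]
              simp only [hstep', if_pos hφ]
              rw [← hdec]
            · have hstep' : ∀ σ₁ : S, step σ σ₁ = if σ = σ₁ then 1 else 0 := by
                intro σ₁; simp [hstep, wp, hφ, pointMass]
              simp only [hstep', if_neg hφ]
              rw [tsum_eq_single σ (by intro b hb; simp [Ne.symm hb])]
              have h1 : F^[k+1] ⊥ σ = X σ := by
                rw [Function.iterate_succ_apply']
                simp [hF, loopIter, hφ]
              rw [h1]
              simp
  have h1 : wpLoop φ C' X σ₀ = ⨆ n : ℕ, F^[n] ⊥ σ₀ := by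
    rw [wpLoop, iSup_apply]
  rw [h1]
  have h2 : (⨆ n : ℕ, F^[n] ⊥ σ₀) = ⨆ k : ℕ, F^[k+1] ⊥ σ₀ := by
    apply le_antisymm
    · apply iSup_le
      intro n
      cases n with
      | zero => simp
      | succ k => exact le_iSup (fun k => F^[k+1] ⊥ σ₀) k
    · exact iSup_le fun k => le_iSup (fun n => F^[n] ⊥ σ₀) (k+1)
  rw [h2]
  exact iSup_congr fun k => (key k σ₀).symm
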